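/- With the notation of the relation A_{n+j,n_q} = −R_{n_q} A_{n−j−1,n_q} R_{n_q+1} between the Toeplitz matrices built from aliased Chebyshev coefficients, a vector q ∈ ℝ^{n_q+1} lies in the kernel of A_{n+j,n_q} if and only if the flipped vector R_{n_q+1} q lies in the kernel of A_{n−j−1,n_q}. Hence the denominator coefficient vectors of the Padé–Chebyshev approximants of orders [(n−j−1)/n_q] and [(n+j)/n_q] are related by q^{n−j−1} = R_{n_q+1} q^{n+j}. -/

import Mathlib

/-!
Flipping both the rows and the columns of the Toeplitz matrix `A_{n+j,n_q}` reflects its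
entries `c_{n+j+1+i-k}` about the index `n`; by the anti-symmetry of the aliased coefficients
this turns it into `-A_{n-j-1,n_q}`, i.e. `A_{n+j,n_q} = -R_{n_q} A_{n-j-1,n_q} R_{n_q+1}`.
Since the flip matrices are involutions, the two kernels correspond under `R_{n_q+1}`.
-/

def flipMatrix (m : ℕ) : Matrix (Fin m) (Fin m) ℝ :=
  Matrix.of fun i j => if (i : ℕ) + (j : ℕ) = m - 1 then 1 else 0

open Matrix

theorem flipMatrix_eq_submatrix_one (m : ℕ) :
    flipMatrix m = (1 : Matrix (Fin m) (Fin m) ℝ).submatrix Fin.revPerm (Equiv.refl _) := by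
  ext i j
  simp only [flipMatrix, of_apply, submatrix_apply, Fin.revPerm_apply, Equiv.refl_apply,
    one_apply, Fin.ext_iff, Fin.val_rev]
  congr 1
  exact propext (by omega)

theorem flipMatrix_mul_mul_flipMatrix {m p : ℕ} (M : Matrix (Fin m) (Fin p) ℝ) :
    flipMatrix m * M * flipMatrix p = M.submatrix Fin.rev Fin.rev := by
  rw [flipMatrix_eq_submatrix_one, flipMatrix_eq_submatrix_one, one_submatrix_mul,
    mul_submatrix_one]
  rfl

theorem flipMatrix_mul_self (m : ℕ) : flipMatrix m * flipMatrix m = 1 := by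
  rw [← (flipMatrix_mul_mul_flipMatrix 1).trans (submatrix_one_equiv Fin.revPerm), mul_one]

theorem isUnit_flipMatrix (m : ℕ) : IsUnit (flipMatrix m) :=
  .of_mul_eq_one _ (flipMatrix_mul_self m)

theorem mulVec_eq_zero_iff_of_isUnit {ι κ R : Type*} [Fintype ι] [DecidableEq ι] [Fintype κ]
    [Semiring R] {U : Matrix ι ι R} (hU : IsUnit U) {M : Matrix ι κ R} {v : κ → R} :
    (U * M) *ᵥ v = 0 ↔ M *ᵥ v = 0 := by
  rw [← mulVec_mulVec, (mulVec_injective_of_isUnit hU).eq_iff' (mulVec_zero U)]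

theorem apply_add_eq_neg_apply_sub {G : Type*} [AddGroup G] {c : ℤ → G} {a N : ℤ}
    (hanti : ∀ i, 1 ≤ i → i ≤ N → c (a + i) = -c (a - i)) (hzero : c a = 0)
    {s : ℤ} (hlo : -N ≤ s) (hhi : s ≤ N) : c (a + s) = -c (a - s) := by
  rcases lt_trichotomy s 0 with hs | rfl | hs
  · have h := hanti (-s) (by omega) (by omega)
    rw [sub_neg_eq_add, ← sub_eq_add_neg] at h
    rw [h, neg_neg]
  · simp [hzero]
  · exact hanti s hs hhi

/-- The matrix `A_{n_p,n_q}` of the Padé–Chebyshev denominator equations. -/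
def padeMatrix (c : ℤ → ℝ) (np : ℤ) (nq : ℕ) : Matrix (Fin nq) (Fin (nq + 1)) ℝ :=
  Matrix.of fun i k => c (np + 1 + ((i : ℕ) : ℤ) - ((k : ℕ) : ℤ))

theorem padeMatrix_add_eq_neg_flip {c : ℤ → ℝ} {a j : ℤ} {nq : ℕ}
    (hodd : ∀ s, j + 1 - nq ≤ s → s ≤ j + nq → c (a + s) = -c (a - s)) :
    padeMatrix c (a + j) nq =
      -(flipMatrix nq * padeMatrix c (a - j - 1) nq * flipMatrix (nq + 1)) := by
  rw [flipMatrix_mul_mul_flipMatrix]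
  ext i k
  have hi : ((i.rev : ℕ) : ℤ) = nq - 1 - (i : ℕ) := by rw [Fin.val_rev]; omega
  have hk : ((k.rev : ℕ) : ℤ) = nq - (k : ℕ) := by rw [Fin.val_rev]; omega
  have hs := hodd (j + 1 + (i : ℕ) - (k : ℕ)) (by omega) (by omega)
  simp only [padeMatrix, Matrix.neg_apply, submatrix_apply, of_apply, hi, hk]
  convert hs using 3 <;> ring

theorem pade_denominator_flip_relation_general
    (n nq : ℕ) (j : ℕ) (hj : j + nq + 1 ≤ n)
    (c : ℤ → ℝ)
    (hanti : ∀ i : ℤ, 1 ≤ i → i ≤ 2 * n → c ((n : ℤ) + i) = - c ((n : ℤ) - i))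
    (hzero : c (n : ℤ) = 0)
    (A : ℤ → Matrix (Fin nq) (Fin (nq + 1)) ℝ)
    (hA : ∀ np : ℤ, A np =
      Matrix.of fun (i : Fin nq) (k : Fin (nq + 1)) => c (np + 1 + ((i : ℕ) : ℤ) - ((k : ℕ) : ℤ))) :
    ∀ q : Fin (nq + 1) → ℝ,
      (A ((n : ℤ) + j)).mulVec q = 0 ↔
        (A ((n : ℤ) - j - 1)).mulVec ((flipMatrix (nq + 1)).mulVec q) = 0 := by
  intro q
  have hA' : ∀ np, A np = padeMatrix c np nq := hA
  have hodd : ∀ s : ℤ, j + 1 - nq ≤ s → s ≤ j + nq → c (n + s) = -c (n - s) :=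
    fun s hlo hhi => apply_add_eq_neg_apply_sub hanti hzero (by omega) (by omega)
  rw [hA', hA', padeMatrix_add_eq_neg_flip hodd, neg_mulVec, neg_eq_zero, Matrix.mul_assoc,
    mulVec_eq_zero_iff_of_isUnit (isUnit_flipMatrix nq), ← mulVec_mulVec]

/-- A vector `q` is in the kernel of `A_{n+j,n_q}` iff the flipped vector
`R_{n_q+1} q` is in the kernel of `A_{n−j−1,n_q}`; hence the denominator coefficient
vectors of the Padé–Chebyshev approximants of orders `[(n−j−1)/n_q]` and `[(n+j)/n_q]`
are related by `q^{n−j−1} = R_{n_q+1} q^{n+j}`. -/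
theorem pade_denominator_flip_relation
    (n nq : ℕ) (hnq : 1 ≤ nq) (j : ℕ) (hj : j + nq + 1 ≤ n)
    (c : ℤ → ℝ)
    (hanti : ∀ i : ℤ, 1 ≤ i → i ≤ 2 * n → c ((n : ℤ) + i) = - c ((n : ℤ) - i))
    (hzero : c (n : ℤ) = 0)
    (A : ℤ → Matrix (Fin nq) (Fin (nq + 1)) ℝ)
    (hA : ∀ np : ℤ, A np =
      Matrix.of fun (i : Fin nq) (k : Fin (nq + 1)) => c (np + 1 + ((i : ℕ) : ℤ) - ((k : ℕ) : ℤ))) :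
    ∀ q : Fin (nq + 1) → ℝ,
      (A ((n : ℤ) + j)).mulVec q = 0 ↔
        (A ((n : ℤ) - j - 1)).mulVec ((flipMatrix (nq + 1)).mulVec q) = 0 :=
  pade_denominator_flip_relation_general n nq j hj c hanti hzero A hA
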